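/- arXiv:1109.5683 — 3 statements merged into one kernel-verified Lean document; each statement's English description precedes it below -/
import Mathlib

section
/- Fix an integer k ≥ 2. The probability that a uniformly random accessible transition structure on n states over a k-letter alphabet contains at least one three-state M-motif is o(n^{2-k}) as n → ∞, i.e., this probability divided by n^{2-k} tends to 0. -/
open scoped Classical BigOperators

namespace ArxivAutomata

/-- Extension of a transition structure to words: `run δ p u = δ(p, u)`. -/
def run {n k : ℕ} (δ : Fin n → Fin k → Fin n) (p : Fin n) (u : List (Fin k)) : Fin n :=
  u.foldl δ p

/-- A transition structure is accessible if every state is reachable from the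
initial state (the state with index 0, representing state 1). -/
def Accessible {n k : ℕ} (δ : Fin n → Fin k → Fin n) : Prop :=
  ∀ q : Fin n, ∃ u : List (Fin k), run δ ⟨0, Fin.pos q⟩ u = q

/-- The finite set of accessible transition structures on `n` states over a
`k`-letter alphabet. -/
noncomputable def accSet (n k : ℕ) : Finset (Fin n → Fin k → Fin n) :=
  Finset.univ.filter fun δ => Accessible δ

/-- Myhill–Nerode equivalence of two states. -/
def MNEquiv {n k : ℕ} (δ : Fin n → Fin k → Fin n) (T : Finset (Fin n)) (p q : Fin n) : Prop :=
  ∀ u : List (Fin k), run δ p u ∈ T ↔ run δ q u ∈ T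

/-- An automaton is minimal if Myhill–Nerode equivalent states are equal. -/
def Minimal {n k : ℕ} (δ : Fin n → Fin k → Fin n) (T : Finset (Fin n)) : Prop :=
  ∀ p q : Fin n, MNEquiv δ T p q → p = q

/-- `{i, j}` is an M-motif: `i ≠ j` and `δ_a(i) = δ_a(j)` for every letter `a`. -/
def IsMMotif {n k : ℕ} (δ : Fin n → Fin k → Fin n) (i j : Fin n) : Prop :=
  i ≠ j ∧ ∀ a : Fin k, δ i a = δ j a

/-- `{i, j, h}` is a three-state M-motif. -/
def IsM3Motif {n k : ℕ} (δ : Fin n → Fin k → Fin n) (i j h : Fin n) : Prop :=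
  i ≠ j ∧ i ≠ h ∧ j ≠ h ∧ ∀ a : Fin k, δ i a = δ j a ∧ δ j a = δ h a

/-- `δ` contains some three-state M-motif. -/
def HasM3 {n k : ℕ} (δ : Fin n → Fin k → Fin n) : Prop :=
  ∃ i j h, IsM3Motif δ i j h

/-- The number of M-motifs of `δ` (unordered pairs counted via `i < j`). -/
noncomputable def mCount {n k : ℕ} (δ : Fin n → Fin k → Fin n) : ℕ :=
  (Finset.univ.filter fun p : Fin n × Fin n =>
    p.1 < p.2 ∧ ∀ a : Fin k, δ p.1 a = δ p.2 a).card

/-- The number of three-state M-motifs of `δ` (unordered triples via `i < j < h`). -/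
noncomputable def m3Count {n k : ℕ} (δ : Fin n → Fin k → Fin n) : ℕ :=
  (Finset.univ.filter fun p : Fin n × Fin n × Fin n =>
    p.1 < p.2.1 ∧ p.2.1 < p.2.2 ∧
      ∀ a : Fin k, δ p.1 a = δ p.2.1 a ∧ δ p.2.1 a = δ p.2.2 a).card

/-- The Bernoulli measure of parameter `b` of a set of terminal states. -/
noncomputable def bern (b : ℝ) {n : ℕ} (T : Finset (Fin n)) : ℝ :=
  b ^ T.card * (1 - b) ^ (n - T.card)

/-!
Switching argument. In an accessible `δ` with a three-state M-motif `{u, v, w}`, choose `u` to be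
the motif state closest to the initial state. Since `v` and `w` have the same row as `u`, every
path through `v` or `w` can be rerouted through `u`, so overwriting the rows of `v` and `w` by
arbitrary rows keeps `δ` accessible. The overwritten structure together with the triple
`(u, v, w)` determines `δ` and the two new rows, hence
`#{δ with a motif} · n^{2k} ≤ n^3 · #{accessible δ}`, and the probability is `O(n^{3-2k})`.
-/

section

variable {n k : ℕ}

/-- `sInf ∅ = 0`: an unreachable state has depth `0`. -/
noncomputable def depth (δ : Fin n → Fin k → Fin n) (p₀ q : Fin n) : ℕ :=
  sInf {m | ∃ l : List (Fin k), l.length = m ∧ run δ p₀ l = q}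

lemma run_concat (δ : Fin n → Fin k → Fin n) (p : Fin n) (u : List (Fin k)) (a : Fin k) :
    run δ p (u ++ [a]) = δ (run δ p u) a :=
  List.foldl_concat ..

lemma depth_le_length {δ : Fin n → Fin k → Fin n} {p₀ : Fin n} (l : List (Fin k)) :
    depth δ p₀ (run δ p₀ l) ≤ l.length :=
  Nat.sInf_le ⟨l, rfl, rfl⟩

lemma exists_run_length_depth {δ : Fin n → Fin k → Fin n} {p₀ q : Fin n}
    (h : ∃ l, run δ p₀ l = q) : ∃ l : List (Fin k), l.length = depth δ p₀ q ∧ run δ p₀ l = q :=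
  let ⟨l, hl⟩ := h
  Nat.sInf_mem (s := {m | ∃ l : List (Fin k), l.length = m ∧ run δ p₀ l = q}) ⟨_, l, rfl, hl⟩

/-- A `δ`-path through a changed state `p` is rerouted through `u`, which is reached by a word no
longer than the one reaching `p`. -/
theorem reachable_of_rows_eq_shallower {δ δ' : Fin n → Fin k → Fin n} {p₀ u : Fin n}
    (hreach : ∀ q, ∃ l, run δ p₀ l = q) (hu : δ' u = δ u)
    (hδ' : ∀ p, δ' p = δ p ∨ (δ p = δ u ∧ depth δ p₀ u ≤ depth δ p₀ p)) (q : Fin n) :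
    ∃ l, run δ' p₀ l = q := by
  obtain ⟨l, rfl⟩ := hreach q
  induction hlen : l.length using Nat.strong_induction_on generalizing l with
  | _ m ih =>
    rcases List.eq_nil_or_concat' l with rfl | ⟨xs, a, rfl⟩
    · exact ⟨[], rfl⟩
    have hxs : xs.length < m := by simp [← hlen]
    rw [run_concat]
    rcases hδ' (run δ p₀ xs) with hrow | ⟨hrow, hdepth⟩
    · obtain ⟨l', hl'⟩ := ih _ hxs xs rfl
      exact ⟨l' ++ [a], by rw [run_concat, hl', hrow]⟩
    · obtain ⟨lu, hlu, rfl⟩ := exists_run_length_depth (hreach u)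
      have : lu.length < m := by
        rw [hlu]; exact (hdepth.trans (depth_le_length xs)).trans_lt hxs
      obtain ⟨l', hl'⟩ := ih _ this lu rfl
      exact ⟨l' ++ [a], by rw [run_concat, hl', hu, hrow]⟩

lemma IsM3Motif.swap {δ : Fin n → Fin k → Fin n} {i j h : Fin n} (hm : IsM3Motif δ i j h) :
    IsM3Motif δ j i h := by
  obtain ⟨hij, hih, hjh, hrows⟩ := hm
  exact ⟨hij.symm, hjh, hih, fun a => ⟨(hrows a).1.symm, (hrows a).1.trans (hrows a).2⟩⟩

lemma IsM3Motif.rotate {δ : Fin n → Fin k → Fin n} {i j h : Fin n} (hm : IsM3Motif δ i j h) :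
    IsM3Motif δ h i j := by
  obtain ⟨hij, hih, hjh, hrows⟩ := hm
  exact ⟨hih.symm, hjh.symm, hij, fun a => ⟨((hrows a).1.trans (hrows a).2).symm, (hrows a).1⟩⟩

lemma IsM3Motif.row_eq {δ : Fin n → Fin k → Fin n} {u v w : Fin n} (hm : IsM3Motif δ u v w) :
    δ v = δ u ∧ δ w = δ u :=
  ⟨funext fun a => (hm.2.2.2 a).1.symm,
    funext fun a => ((hm.2.2.2 a).1.trans (hm.2.2.2 a).2).symm⟩

def IsAnchoredM3Motif (δ : Fin n → Fin k → Fin n) (p₀ u v w : Fin n) : Prop :=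
  IsM3Motif δ u v w ∧ depth δ p₀ u ≤ depth δ p₀ v ∧ depth δ p₀ u ≤ depth δ p₀ w

lemma HasM3.exists_anchored {δ : Fin n → Fin k → Fin n} (h : HasM3 δ) (p₀ : Fin n) :
    ∃ u v w, IsAnchoredM3Motif δ p₀ u v w := by
  obtain ⟨i, j, l, hm⟩ := h
  by_cases hi : depth δ p₀ i ≤ depth δ p₀ j ∧ depth δ p₀ i ≤ depth δ p₀ l
  · exact ⟨i, j, l, hm, hi⟩
  by_cases hj : depth δ p₀ j ≤ depth δ p₀ l
  · exact ⟨j, i, l, hm.swap, by omega, hj⟩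
  · exact ⟨l, i, j, hm.rotate, by omega, by omega⟩

def switch (v w : Fin n) (x : (Fin n → Fin k → Fin n) × (Fin k → Fin n) × (Fin k → Fin n)) :
    Fin n → Fin k → Fin n :=
  Function.update (Function.update x.1 v x.2.1) w x.2.2

lemma switch_mem_accSet {δ : Fin n → Fin k → Fin n} {u v w : Fin n}
    (hδ : δ ∈ accSet n k) (hm : IsAnchoredM3Motif δ ⟨0, u.pos⟩ u v w) (r s : Fin k → Fin n) :
    switch v w (δ, r, s) ∈ accSet n k := by
  obtain ⟨hv, hw⟩ := hm.1.row_eq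
  obtain ⟨⟨huv, huw, -, -⟩, hdv, hdw⟩ := hm
  simp only [accSet, Finset.mem_filter, Finset.mem_univ, true_and] at hδ ⊢
  refine fun q => reachable_of_rows_eq_shallower (p₀ := ⟨0, u.pos⟩) (u := u)
    (fun q => hδ q) (by simp [switch, huv, huw]) (fun p => ?_) q
  by_cases hpw : p = w
  · exact .inr (hpw ▸ ⟨hw, hdw⟩)
  by_cases hpv : p = v
  · exact .inr (hpv ▸ ⟨hv, hdv⟩)
  · exact .inl (by simp [switch, hpv, hpw])

lemma switch_injOn {u v w : Fin n} :
    Set.InjOn (switch (k := k) v w)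
      {x | IsAnchoredM3Motif x.1 ⟨0, u.pos⟩ u v w} := by
  rintro ⟨δ₁, r₁, s₁⟩ ⟨hm₁, -⟩ ⟨δ₂, r₂, s₂⟩ ⟨hm₂, -⟩ heq
  obtain ⟨hv₁, hw₁⟩ := hm₁.row_eq
  obtain ⟨hv₂, hw₂⟩ := hm₂.row_eq
  obtain ⟨huv, huw, hvw, -⟩ := hm₁
  have hrow : ∀ p, p ≠ v → p ≠ w → δ₁ p = δ₂ p := fun p hpv hpw => by
    simpa [switch, hpv, hpw] using congrFun heq p
  have hu : δ₁ u = δ₂ u := hrow u huv huw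
  have hr : r₁ = r₂ := by simpa [switch, hvw] using congrFun heq v
  have hs : s₁ = s₂ := by simpa [switch] using congrFun heq w
  refine Prod.ext (funext fun p => ?_) (Prod.ext hr hs)
  by_cases hpv : p = v
  · rw [hpv, hv₁, hv₂]; exact hu
  by_cases hpw : p = w
  · rw [hpw, hw₁, hw₂]; exact hu
  exact hrow p hpv hpw

lemma card_anchored_mul_le (u v w : Fin n) :
    ((accSet n k).filter fun δ => IsAnchoredM3Motif δ ⟨0, u.pos⟩ u v w).card * (n ^ k * n ^ k)
      ≤ (accSet n k).card := by
  set S := (accSet n k).filter fun δ => IsAnchoredM3Motif δ ⟨0, u.pos⟩ u v w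
  calc S.card * (n ^ k * n ^ k)
      = (S ×ˢ (Finset.univ : Finset ((Fin k → Fin n) × (Fin k → Fin n)))).card := by
        simp [Finset.card_product]
    _ ≤ (accSet n k).card := by
      refine Finset.card_le_card_of_injOn (switch v w) (fun x hx => ?_)
        ((switch_injOn (u := u)).mono fun x hx => ?_)
      all_goals
        obtain ⟨hx, -⟩ := Finset.mem_product.1 hx
        obtain ⟨hacc, hm⟩ := Finset.mem_filter.1 hx
      · exact switch_mem_accSet hacc hm _ _
      · exact hm

end

lemma card_hasM3_mul_le (n k : ℕ) :
    ((accSet n k).filter fun δ => HasM3 δ).card * (n ^ k * n ^ k) ≤ n ^ 3 * (accSet n k).card := by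
  set S : Fin n × Fin n × Fin n → Finset (Fin n → Fin k → Fin n) := fun t =>
    (accSet n k).filter fun δ => IsAnchoredM3Motif δ ⟨0, t.1.pos⟩ t.1 t.2.1 t.2.2
  have hcover : (accSet n k).filter (fun δ => HasM3 δ) ⊆ Finset.univ.biUnion S := by
    intro δ hδ
    obtain ⟨hacc, h⟩ := Finset.mem_filter.1 hδ
    obtain ⟨u, v, w, hanch⟩ := h.exists_anchored ⟨0, h.choose.pos⟩
    exact Finset.mem_biUnion.2 ⟨(u, v, w), Finset.mem_univ _, Finset.mem_filter.2 ⟨hacc, hanch⟩⟩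
  calc ((accSet n k).filter fun δ => HasM3 δ).card * (n ^ k * n ^ k)
      ≤ (∑ t, (S t).card) * (n ^ k * n ^ k) :=
        Nat.mul_le_mul_right _ ((Finset.card_le_card hcover).trans Finset.card_biUnion_le)
    _ = ∑ t, (S t).card * (n ^ k * n ^ k) := Finset.sum_mul ..
    _ ≤ ∑ _t : Fin n × Fin n × Fin n, (accSet n k).card :=
        Finset.sum_le_sum fun t _ => card_anchored_mul_le t.1 t.2.1 t.2.2
    _ = n ^ 3 * (accSet n k).card := by
        simp only [Finset.sum_const, Finset.card_univ, Fintype.card_prod, Fintype.card_fin,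
          smul_eq_mul]
        ring

lemma hasM3_fraction_le {n : ℕ} (hn : 0 < n) (k : ℕ) :
    (((accSet n k).filter fun δ => HasM3 δ).card : ℝ) / (accSet n k).card
      ≤ (n : ℝ) ^ 3 / (n : ℝ) ^ (2 * k) := by
  rcases Nat.eq_zero_or_pos (accSet n k).card with h0 | hpos
  · rw [h0, Nat.cast_zero, div_zero]; positivity
  rw [div_le_div_iff₀ (by exact_mod_cast hpos) (by positivity), two_mul, pow_add]
  exact_mod_cast card_hasM3_mul_le n k

/-- For `k ≥ 2`, the probability that a uniformly random
accessible transition structure contains a three-state M-motif is `o(n^{2-k})`. -/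
theorem statement6 (k : ℕ) (hk : 2 ≤ k) :
    Filter.Tendsto
      (fun n : ℕ =>
        ((((accSet n k).filter fun δ => HasM3 δ).card : ℝ) /
          ((accSet n k).card : ℝ)) / (n : ℝ) ^ ((2 : ℤ) - (k : ℤ)))
      Filter.atTop (nhds 0) := by
  refine squeeze_zero' (.of_forall fun n => by positivity) ?_ tendsto_inv_atTop_nhds_zero_nat
  filter_upwards [Filter.eventually_gt_atTop 0] with n hn
  have hn' : (0 : ℝ) < n := by exact_mod_cast hn
  calc _ ≤ (n : ℝ) ^ 3 / (n : ℝ) ^ (2 * k) / (n : ℝ) ^ ((2 : ℤ) - (k : ℤ)) :=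
        div_le_div_of_nonneg_right (hasM3_fraction_le hn k) (by positivity)
    _ = (n : ℝ) ^ ((1 : ℤ) - k) := by
        rw [← zpow_natCast, ← zpow_natCast, ← zpow_sub₀ hn'.ne', ← zpow_sub₀ hn'.ne']
        congr 1; push_cast; ring
    _ ≤ (n : ℝ) ^ (-1 : ℤ) := by
        gcongr
        · exact_mod_cast hn
        · omega
    _ = (n : ℝ)⁻¹ := zpow_neg_one _

end ArxivAutomata
end

section
/- Fix integers M ≥ n ≥ 1 and let x : [n] → [M] be strictly increasing with x(1) = 1; extend it by setting x(n+1) = M+1. Then the number of tableaux T ∈ 𝒯[M×n] whose backbone is x (i.e., with x_T(y) = x(y) for all y ∈ [n]) equals the product over y from 1 to n of y^{c_y}, where c_y = x(y+1) - x(y) - 1. -/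
/-!
A map `T` has backbone `x` exactly when every column `q` satisfies a local condition: column
`x(y)` carries row `y`, and any other column carries a row `y` with `x(y) < q`. The conditions
are independent across columns, so these tableaux form a product set, and a column strictly
between `x(y)` and `x(y+1)` admits exactly the rows `1, …, y`.
-/

open scoped Classical BigOperators

namespace ArxivAutomata

/-- For `T : Fin M → Fin n` and a row `y`, the 1-based position
`x_T(y) = min T⁻¹(y)` of the first (red) mark in row `y`
(columns are numbered `1, …, M`). -/
noncomputable def xT {M n : ℕ} (T : Fin M → Fin n) (y : Fin n) : ℕ :=
  sInf {x : ℕ | ∃ hx : x - 1 < M, 1 ≤ x ∧ T ⟨x - 1, hx⟩ = y}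

/-- A tableau in `𝒯[M × n]`: a surjection `T : [M] → [n]` whose first-preimage
function `x_T` is strictly increasing. -/
def IsTableau {M n : ℕ} (T : Fin M → Fin n) : Prop :=
  Function.Surjective T ∧ StrictMono fun y : Fin n => xT T y

/-- The finite set `𝒯[M × n]` of tableaux. -/
noncomputable def tabSet (M n : ℕ) : Finset (Fin M → Fin n) :=
  Finset.univ.filter fun T => IsTableau T

/-- The finite set `𝒯[M × n; f]` of tableaux whose backbone is dominated by
`f : [n] → [M]` (with rows indexed by `Fin n`, `f y` bounding row `y+1`). -/
noncomputable def tabSetLe (M n : ℕ) (f : Fin n → ℕ) : Finset (Fin M → Fin n) :=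
  Finset.univ.filter fun T => IsTableau T ∧ ∀ y : Fin n, xT T y ≤ f y

section Backbone

variable {M n : ℕ}

lemma xT_eq_succ_iff (T : Fin M → Fin n) (y : Fin n) (p : Fin M) :
    xT T y = p + 1 ↔ T p = y ∧ ∀ q < p, T q ≠ y := by
  set S := {z : ℕ | ∃ hz : z - 1 < M, 1 ≤ z ∧ T ⟨z - 1, hz⟩ = y}
  have mem_S : ∀ q : Fin M, (q : ℕ) + 1 ∈ S ↔ T q = y := fun q =>
    ⟨fun ⟨_, _, h⟩ => by simpa using h, fun h => ⟨by simp, by omega, by simpa using h⟩⟩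
  change sInf S = p + 1 ↔ _
  constructor
  · intro h
    have hp : (p : ℕ) + 1 ∈ S := h ▸ Nat.sInf_mem (Nat.nonempty_of_pos_sInf (by omega))
    refine ⟨(mem_S p).1 hp, fun q hqp hq => ?_⟩
    have := Nat.sInf_le ((mem_S q).2 hq)
    omega
  · rintro ⟨hp, hfirst⟩
    refine le_antisymm (Nat.sInf_le ((mem_S p).2 hp)) (le_csInf ⟨_, (mem_S p).2 hp⟩ ?_)
    rintro z ⟨hz, hz1, hTz⟩
    by_contra! hlt
    exact hfirst ⟨z - 1, hz⟩ (Fin.lt_def.2 (by simp; omega)) hTz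

lemma xT_apply_le (T : Fin M → Fin n) (p : Fin M) : xT T (T p) ≤ p + 1 :=
  Nat.sInf_le ⟨by simp, by omega, by simp⟩

/-- The rows that may occupy column `q` (1-based) of a tableau with backbone `b`. -/
noncomputable def admissibleRows (b : Fin n → ℕ) (q : ℕ) : Finset (Fin n) :=
  Finset.univ.filter fun v => b v ≤ q ∧ ∀ w, b w = q → v = w

lemma xT_eq_iff_forall_mem_admissibleRows (b : Fin n → ℕ) (hb : ∀ y, 1 ≤ b y ∧ b y ≤ M)
    (T : Fin M → Fin n) :
    (∀ y, xT T y = b y) ↔ ∀ p : Fin M, T p ∈ admissibleRows b (p + 1) := by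
  simp only [admissibleRows, Finset.mem_filter, Finset.mem_univ, true_and]
  constructor
  · intro hT p
    refine ⟨hT (T p) ▸ xT_apply_le T p, fun w hw => ?_⟩
    exact ((xT_eq_succ_iff T w p).1 ((hT w).trans hw)).1
  · intro hT y
    let p : Fin M := ⟨b y - 1, by have := hb y; omega⟩
    have hbp : b y = p + 1 := by have := hb y; simp only [p]; omega
    rw [hbp, xT_eq_succ_iff]
    refine ⟨(hT p).2 y hbp, fun q hqp hq => ?_⟩
    have := (hT q).1
    rw [hq, hbp] at this
    omega

lemma filter_tabSet_xT_eq (b : Fin n → ℕ) (hb : ∀ y, 1 ≤ b y ∧ b y ≤ M)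
    (hmono : StrictMono b) :
    (tabSet M n).filter (fun T => ∀ y, xT T y = b y) =
      Fintype.piFinset fun p : Fin M => admissibleRows b (p + 1) := by
  ext T
  rw [Fintype.mem_piFinset, ← xT_eq_iff_forall_mem_admissibleRows b hb]
  simp only [tabSet, Finset.mem_filter, Finset.mem_univ, true_and, and_iff_right_iff_imp]
  intro hT
  refine ⟨fun y => ?_, fun y y' h => by simpa only [hT] using hmono h⟩
  have := hb y
  exact ⟨⟨b y - 1, by omega⟩, ((xT_eq_succ_iff T y _).1 (by rw [hT, Fin.val_mk]; omega)).1⟩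

end Backbone

lemma prod_Ico_eq_prod_Ico_blocks {β : Type*} [CommMonoid β] (f : ℕ → β) {x : ℕ → ℕ}
    {a b : ℕ} (hab : a ≤ b) (hx : MonotoneOn x (Set.Icc a b)) :
    ∏ q ∈ Finset.Ico (x a) (x b), f q =
      ∏ y ∈ Finset.Ico a b, ∏ q ∈ Finset.Ico (x y) (x (y + 1)), f q := by
  induction b, hab using Nat.le_induction with
  | base => simp
  | succ b hab ih =>
    have hx' : MonotoneOn x (Set.Icc a b) := hx.mono (Set.Icc_subset_Icc_right (by omega))
    rw [Finset.prod_Ico_succ_top hab, ← ih hx', Finset.prod_Ico_consecutive]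
    · exact hx ⟨le_rfl, by omega⟩ ⟨hab, by omega⟩ hab
    · exact hx ⟨hab, by omega⟩ ⟨by omega, le_rfl⟩ (by omega)

section Counting

variable {n : ℕ} {x : ℕ → ℕ} {y : ℕ}

lemma card_admissibleRows_eq_one (hx : StrictMonoOn x (Set.Icc 1 (n + 1)))
    (hy : y ∈ Set.Icc 1 n) :
    (admissibleRows (fun w : Fin n => x (w + 1)) (x y)).card = 1 := by
  rw [Finset.card_eq_one]
  refine ⟨⟨y - 1, by grind⟩, Finset.eq_singleton_iff_unique_mem.2 ⟨?_, fun v hv => ?_⟩⟩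
  · simp only [admissibleRows, Finset.mem_filter, Finset.mem_univ, true_and]
    refine ⟨by rw [Nat.sub_add_cancel hy.1], fun w hw => Fin.ext ?_⟩
    have := hx.injOn ⟨by omega, by omega⟩ ⟨hy.1, by grind⟩ hw
    simp only
    omega
  · simp only [admissibleRows, Finset.mem_filter, Finset.mem_univ, true_and] at hv
    exact hv.2 _ (by simp only; rw [Nat.sub_add_cancel hy.1])

lemma card_admissibleRows_of_mem_Ioo (hx : StrictMonoOn x (Set.Icc 1 (n + 1)))
    (hy : y ∈ Set.Icc 1 n) {q : ℕ} (hq : q ∈ Set.Ioo (x y) (x (y + 1))) :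
    (admissibleRows (fun w : Fin n => x (w + 1)) q).card = y := by
  have below : ∀ v : Fin n, (v : ℕ) < y → x (v + 1) < q := fun v hv =>
    (hx.monotoneOn ⟨by omega, by omega⟩ ⟨hy.1, by grind⟩ (by omega)).trans_lt hq.1
  have above : ∀ v : Fin n, y ≤ v → q < x (v + 1) := fun v hv =>
    hq.2.trans_le (hx.monotoneOn ⟨by omega, by grind⟩ ⟨by omega, by omega⟩ (by omega))
  have : admissibleRows (fun w : Fin n => x (w + 1)) q =
      Finset.univ.filter fun v : Fin n => (v : ℕ) < y := by
    ext v
    simp only [admissibleRows, Finset.mem_filter, Finset.mem_univ, true_and]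
    constructor
    · rintro ⟨hv, -⟩
      by_contra! h
      exact absurd (above v h) (by omega)
    · intro hv
      refine ⟨(below v hv).le, fun w hw => ?_⟩
      rcases lt_or_ge (w : ℕ) y with h | h
      · exact absurd (below w h) (by omega)
      · exact absurd (above w h) (by omega)
  rw [this, Fin.card_filter_val_lt, min_eq_right hy.2]

lemma prod_card_admissibleRows_Ico (hx : StrictMonoOn x (Set.Icc 1 (n + 1)))
    (hy : y ∈ Set.Icc 1 n) :
    ∏ q ∈ Finset.Ico (x y) (x (y + 1)), (admissibleRows (fun w : Fin n => x (w + 1)) q).card =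
      y ^ (x (y + 1) - x y - 1) := by
  have hlt : x y < x (y + 1) := hx ⟨hy.1, by grind⟩ ⟨by omega, by grind⟩ (by omega)
  rw [Finset.prod_eq_prod_Ico_succ_bot hlt, card_admissibleRows_eq_one hx hy, one_mul,
    Finset.prod_congr rfl fun q hq => card_admissibleRows_of_mem_Ioo hx hy
      (by rw [Finset.mem_Ico] at hq; exact ⟨by omega, hq.2⟩),
    Finset.prod_const, Nat.card_Ico, Nat.sub_sub]

end Counting

theorem statement16_general (M n : ℕ)
    (x : ℕ → ℕ) (hx1 : x 1 = 1) (hxM : x (n + 1) = M + 1)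
    (hmono : StrictMonoOn x (Set.Icc 1 (n + 1))) :
    (((tabSet M n).filter fun T => ∀ y : Fin n, xT T y = x ((y : ℕ) + 1)).card) =
      ∏ y ∈ Finset.Icc 1 n, y ^ (x (y + 1) - x y - 1) := by
  set b : Fin n → ℕ := fun w => x (w + 1)
  have hb : ∀ y, 1 ≤ b y ∧ b y ≤ M := fun y => by
    have h1 := hmono.monotoneOn ⟨le_rfl, by omega⟩ ⟨by omega, by omega⟩
      (by omega : 1 ≤ (y : ℕ) + 1)
    have h2 := hmono ⟨by omega, by omega⟩ ⟨by omega, le_rfl⟩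
      (by omega : (y : ℕ) + 1 < n + 1)
    exact ⟨hx1 ▸ h1, show x (y + 1) ≤ M by omega⟩
  have hb_mono : StrictMono b := fun v w h =>
    hmono ⟨by omega, by omega⟩ ⟨by omega, by omega⟩ (by simpa using h)
  have hIco : Finset.Ico 1 (M + 1) = Finset.Ico (x 1) (x (n + 1)) := by rw [hx1, hxM]
  rw [filter_tabSet_xT_eq b hb hb_mono, Fintype.card_piFinset,
    Fin.prod_univ_eq_prod_range (fun q => (admissibleRows b (q + 1)).card), Finset.range_eq_Ico,
    Finset.prod_Ico_add' (fun q => (admissibleRows b q).card), zero_add, hIco,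
    prod_Ico_eq_prod_Ico_blocks _ (by omega) hmono.monotoneOn, Finset.Ico_add_one_right_eq_Icc]
  exact Finset.prod_congr rfl fun y hy => prod_card_admissibleRows_Ico hmono (by simpa using hy)

/-- Let `x : [n] → [M]` be strictly increasing with
`x(1) = 1`, extended by `x(n+1) = M+1`.  The number of tableaux in `𝒯[M×n]`
with backbone `x` equals `∏_{y=1}^{n} y^{c_y}` with `c_y = x(y+1) - x(y) - 1`. -/
theorem statement16 (M n : ℕ) (hn : 1 ≤ n) (hM : n ≤ M)
    (x : ℕ → ℕ) (hx1 : x 1 = 1) (hxM : x (n + 1) = M + 1)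
    (hmono : StrictMonoOn x (Set.Icc 1 (n + 1)))
    (hxle : ∀ y ∈ Set.Icc 1 n, x y ≤ M) :
    (((tabSet M n).filter fun T => ∀ y : Fin n, xT T y = x ((y : ℕ) + 1)).card) =
      ∏ y ∈ Finset.Icc 1 n, y ^ (x (y + 1) - x y - 1) :=
  statement16_general M n x hx1 hxM hmono

end ArxivAutomata
end

section
/- Fix an integer k ≥ 2 and set C = 1 + (k+1)^{2k}/(2·(k-1)!). For all sufficiently large n, the probability that a uniformly random k-map δ : [n] × [k] → [n] has a sink state or a sink pair is at most C·n^{1-k}. -/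
/-!
Union bound. A fixed state is a sink state of a fraction `n^{-k}` of all `k`-maps, so sink states
contribute at most `n · n^{-k}`. If `i, j` form a sink pair, all `2k` images of `i` and `j` lie in
`{i, j} ∪ S` for some `(k-1)`-set `S` of other states; for fixed `i, j, S` this happens for a
fraction at most `((k+1)/n)^{2k}` of the maps, and there are at most `n²/2 · n^{k-1}/(k-1)!`
choices of `{i, j}` and `S`. Together this gives `(1 + (k+1)^{2k}/(2(k-1)!)) · n^{1-k}`.
-/

open scoped Classical BigOperators

namespace ArxivAutomata

def SinkState {n k : ℕ} (δ : Fin n → Fin k → Fin n) (i : Fin n) : Prop :=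
  ∀ a : Fin k, δ i a = i

/-- The set `N_{ij} = {i, j, δ_1(i), δ_1(j), …, δ_k(i), δ_k(j)}`. -/
noncomputable def nbhd {n k : ℕ} (δ : Fin n → Fin k → Fin n) (i j : Fin n) :
    Finset (Fin n) :=
  {i, j} ∪ Finset.image (δ i) Finset.univ ∪ Finset.image (δ j) Finset.univ

def SinkPair {n k : ℕ} (δ : Fin n → Fin k → Fin n) (i j : Fin n) : Prop :=
  i ≠ j ∧ (nbhd δ i j).card ≤ k + 1

open Finset

-- Generic in the decidability instance, so that it rewrites the classical filters below.
theorem card_filter_forall_mem {α β : Type*} [Fintype α] [DecidableEq α] [Fintype β]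
    (s : Finset α) (t : α → Finset β) [DecidablePred fun δ : α → β => ∀ a ∈ s, δ a ∈ t a] :
    #{δ : α → β | ∀ a ∈ s, δ a ∈ t a} =
      (∏ a ∈ s, #(t a)) * Fintype.card β ^ (Fintype.card α - #s) := by
  have hpi : ({δ : α → β | ∀ a ∈ s, δ a ∈ t a} : Finset _) =
      Fintype.piFinset fun a => if a ∈ s then t a else univ := by
    ext δ
    simp only [mem_filter, mem_univ, true_and, Fintype.mem_piFinset]
    refine ⟨fun h a => ?_, fun h a ha => by simpa [ha] using h a⟩
    split_ifs with ha
    exacts [h a ha, mem_univ _]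
  rw [hpi, Fintype.card_piFinset]
  simp only [apply_ite Finset.card]
  rw [prod_ite, filter_univ_mem, prod_const, card_univ,
    filter_not, filter_univ_mem, card_univ_sdiff]

section KMaps

variable {n k : ℕ}

theorem card_filter_sinkState (i : Fin n) :
    #{δ : Fin n → Fin k → Fin n | SinkState δ i} = (n ^ k) ^ (n - 1) := by
  convert card_filter_forall_mem {i} fun _ => ({fun _ => i} : Finset (Fin k → Fin n)) using 2
  · ext δ
    simp only [mem_filter, mem_univ, true_and, mem_singleton, forall_eq, funext_iff]
    rfl
  · simp

theorem card_filter_exists_sinkState_le :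
    #{δ : Fin n → Fin k → Fin n | ∃ i, SinkState δ i} ≤ n * (n ^ k) ^ (n - 1) := by
  calc #{δ : Fin n → Fin k → Fin n | ∃ i, SinkState δ i}
      ≤ #(univ.biUnion fun i => {δ : Fin n → Fin k → Fin n | SinkState δ i}) := by
        gcongr
        intro δ
        simp
    _ ≤ #(univ : Finset (Fin n)) * (n ^ k) ^ (n - 1) :=
        card_biUnion_le_card_mul _ _ _ fun i _ => (card_filter_sinkState i).le
    _ = n * (n ^ k) ^ (n - 1) := by rw [card_univ, Fintype.card_fin]

theorem nbhd_comm (δ : Fin n → Fin k → Fin n) (i j : Fin n) : nbhd δ i j = nbhd δ j i := by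
  rw [nbhd, nbhd, pair_comm, union_right_comm]

theorem SinkPair.symm {δ : Fin n → Fin k → Fin n} {i j : Fin n} (h : SinkPair δ i j) :
    SinkPair δ j i :=
  ⟨h.1.symm, nbhd_comm δ i j ▸ h.2⟩

theorem SinkPair.exists_subset {δ : Fin n → Fin k → Fin n} {i j : Fin n} (h : SinkPair δ i j)
    (hkn : k + 1 ≤ n) :
    ∃ S ∈ powersetCard (k - 1) ({i, j}ᶜ : Finset (Fin n)),
      ∀ a ∈ ({i, j} : Finset (Fin n)), δ a ∈ Fintype.piFinset fun _ => {i, j} ∪ S := by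
  have hpair : #({i, j} : Finset (Fin n)) = 2 := card_pair h.1
  have hsub : {i, j} ⊆ nbhd δ i j := subset_union_left.trans subset_union_left
  obtain ⟨S, hS, hSsub, hScard⟩ := exists_subsuperset_card_eq
    (s := nbhd δ i j \ {i, j}) (t := {i, j}ᶜ) (n := k - 1)
    (fun x hx => mem_compl.2 (mem_sdiff.1 hx).2)
    (by rw [card_sdiff_of_subset hsub]; have := h.2; omega)
    (by rw [card_compl, hpair, Fintype.card_fin]; omega)
  refine ⟨S, mem_powersetCard.2 ⟨hSsub, hScard⟩, fun a ha => Fintype.mem_piFinset.2 fun b => ?_⟩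
  have hmem : δ a b ∈ nbhd δ i j := by
    rcases mem_insert.1 ha with rfl | ha
    · simp [nbhd]
    · rw [mem_singleton.1 ha]; simp [nbhd]
  rw [← union_sdiff_of_subset hsub] at hmem
  exact union_subset_union_right hS hmem

theorem card_filter_sinkPair_le {i j : Fin n} (hij : i ≠ j) (hk : 1 ≤ k) (hkn : k + 1 ≤ n) :
    #{δ : Fin n → Fin k → Fin n | SinkPair δ i j} ≤
      (n - 2).choose (k - 1) * ((k + 1) ^ (2 * k) * (n ^ k) ^ (n - 2)) := by
  have hpair : #({i, j} : Finset (Fin n)) = 2 := card_pair hij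
  have hcover : ({δ | SinkPair δ i j} : Finset (Fin n → Fin k → Fin n)) ⊆
      (powersetCard (k - 1) ({i, j}ᶜ : Finset (Fin n))).biUnion fun S =>
        univ.filter fun δ => ∀ a ∈ ({i, j} : Finset (Fin n)),
          δ a ∈ Fintype.piFinset fun _ => {i, j} ∪ S := by
    intro δ hδ
    obtain ⟨S, hS, hδS⟩ := (mem_filter.1 hδ).2.exists_subset hkn
    exact mem_biUnion.2 ⟨S, hS, mem_filter.2 ⟨mem_univ _, hδS⟩⟩
  have hbound : ∀ S ∈ powersetCard (k - 1) ({i, j}ᶜ : Finset (Fin n)),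
      #(univ.filter fun δ : Fin n → Fin k → Fin n => ∀ a ∈ ({i, j} : Finset (Fin n)),
          δ a ∈ Fintype.piFinset fun _ => {i, j} ∪ S) ≤
        (k + 1) ^ (2 * k) * (n ^ k) ^ (n - 2) := by
    intro S hS
    have hcard : #({i, j} ∪ S) ≤ k + 1 := by
      have := card_union_le {i, j} S
      rw [hpair, (mem_powersetCard.1 hS).2] at this
      omega
    rw [card_filter_forall_mem, prod_const, hpair, Fintype.card_piFinset_const]
    simp only [Fintype.card_fun, Fintype.card_fin, ← pow_mul]
    rw [mul_comm k 2]
    gcongr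
  calc #{δ : Fin n → Fin k → Fin n | SinkPair δ i j}
      ≤ _ := card_le_card hcover
    _ ≤ _ := card_biUnion_le_card_mul _ _ _ hbound
    _ = _ := by rw [card_powersetCard, card_compl, hpair, Fintype.card_fin]

theorem card_filter_exists_sinkPair_le (hk : 1 ≤ k) (hkn : k + 1 ≤ n) :
    #{δ : Fin n → Fin k → Fin n | ∃ i j, SinkPair δ i j} ≤
      n.choose 2 * ((n - 2).choose (k - 1) * ((k + 1) ^ (2 * k) * (n ^ k) ^ (n - 2))) := by
  have hcover : ({δ | ∃ i j, SinkPair δ i j} : Finset (Fin n → Fin k → Fin n)) ⊆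
      (univ.filter fun p : Fin n × Fin n => p.1 < p.2).biUnion fun p =>
        univ.filter fun δ => SinkPair δ p.1 p.2 := by
    intro δ hδ
    obtain ⟨i, j, h⟩ := (mem_filter.1 hδ).2
    simp only [mem_biUnion, mem_filter, mem_univ, true_and, Prod.exists]
    rcases h.1.lt_or_gt with hlt | hlt
    exacts [⟨i, j, hlt, h⟩, ⟨j, i, hlt, h.symm⟩]
  calc #{δ : Fin n → Fin k → Fin n | ∃ i j, SinkPair δ i j}
      ≤ _ := card_le_card hcover
    _ ≤ _ := card_biUnion_le_card_mul _ _ _ fun p hp =>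
        card_filter_sinkPair_le (mem_filter.1 hp).2.ne hk hkn
    _ = _ := by rw [Fintype.card_product_filter_lt, Fintype.card_fin]

theorem natCast_zpow_one_sub (hn : 0 < n) (k : ℕ) :
    (n : ℝ) ^ ((1 : ℤ) - k) = n / n ^ k := by
  rw [zpow_sub₀ (by positivity), zpow_one, zpow_natCast]

theorem card_filter_exists_sinkState_div_le (hn : 0 < n) :
    (#{δ : Fin n → Fin k → Fin n | ∃ i, SinkState δ i} : ℝ) /
        Fintype.card (Fin n → Fin k → Fin n) ≤ (n : ℝ) ^ ((1 : ℤ) - k) := by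
  obtain ⟨m, rfl⟩ : ∃ m, n = m + 1 := ⟨n - 1, by omega⟩
  rw [div_le_iff₀ (by positivity), natCast_zpow_one_sub hn]
  calc (#{δ : Fin (m + 1) → Fin k → Fin (m + 1) | ∃ i, SinkState δ i} : ℝ)
      ≤ (m + 1 : ℕ) * (((m + 1 : ℕ) : ℝ) ^ k) ^ m := by
        exact_mod_cast card_filter_exists_sinkState_le
    _ = _ := by
        simp only [Fintype.card_fun, Fintype.card_fin]
        field_simp
        push_cast
        ring

theorem card_filter_exists_sinkPair_div_le (hk : 1 ≤ k) (hkn : k + 1 ≤ n) :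
    (#{δ : Fin n → Fin k → Fin n | ∃ i j, SinkPair δ i j} : ℝ) /
        Fintype.card (Fin n → Fin k → Fin n) ≤
      ((k : ℝ) + 1) ^ (2 * k) / (2 * ((k - 1).factorial : ℝ)) * (n : ℝ) ^ ((1 : ℤ) - k) := by
  obtain ⟨m, rfl⟩ : ∃ m, k = m + 1 := ⟨k - 1, by omega⟩
  obtain ⟨l, rfl⟩ : ∃ l, n = l + 2 := ⟨n - 2, by omega⟩
  rw [div_le_iff₀ (by positivity), natCast_zpow_one_sub (by omega)]
  calc (#{δ : Fin (l + 2) → Fin (m + 1) → Fin (l + 2) | ∃ i j, SinkPair δ i j} : ℝ)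
      ≤ ((l + 2).choose 2 : ℕ) * ((l.choose m : ℕ) *
          ((m + 1 + 1 : ℝ) ^ (2 * (m + 1)) * (((l + 2 : ℕ) : ℝ) ^ (m + 1)) ^ l)) := by
        exact_mod_cast card_filter_exists_sinkPair_le hk hkn
    _ ≤ ((l + 2 : ℕ) : ℝ) ^ 2 / 2 * (((l + 2 : ℕ) : ℝ) ^ m / m.factorial *
          ((m + 1 + 1 : ℝ) ^ (2 * (m + 1)) * (((l + 2 : ℕ) : ℝ) ^ (m + 1)) ^ l)) := by
        gcongr
        · simpa using Nat.choose_le_pow_div (α := ℝ) 2 (l + 2)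
        · refine (Nat.choose_le_pow_div (α := ℝ) m l).trans ?_
          gcongr
          omega
    _ = _ := by
        simp only [Fintype.card_fun, Fintype.card_fin]
        field_simp
        push_cast
        ring

end KMaps

/-- For `k ≥ 2` and `C = 1 + (k+1)^{2k}/(2 (k-1)!)`, for all
sufficiently large `n` the probability that a uniformly random `k`-map on `n`
states has a sink state or a sink pair is at most `C n^{1-k}`. -/
theorem statement17 (k : ℕ) (hk : 2 ≤ k) :
    ∀ᶠ n : ℕ in Filter.atTop,
      (((Finset.univ.filter fun δ : Fin n → Fin k → Fin n =>
            (∃ i, SinkState δ i) ∨ ∃ i j, SinkPair δ i j).card : ℝ) /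
          (Fintype.card (Fin n → Fin k → Fin n) : ℝ)) ≤
        (1 + ((k : ℝ) + 1) ^ (2 * k) / (2 * ((k - 1).factorial : ℝ))) *
          (n : ℝ) ^ ((1 : ℤ) - (k : ℤ)) := by
  filter_upwards [Filter.eventually_ge_atTop (k + 1)] with n hkn
  have hunion : #{δ : Fin n → Fin k → Fin n | (∃ i, SinkState δ i) ∨ ∃ i j, SinkPair δ i j} ≤
      #{δ : Fin n → Fin k → Fin n | ∃ i, SinkState δ i} +
        #{δ : Fin n → Fin k → Fin n | ∃ i j, SinkPair δ i j} := by
    rw [filter_or]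
    exact card_union_le _ _
  calc _ ≤ ((#{δ : Fin n → Fin k → Fin n | ∃ i, SinkState δ i} : ℝ) +
          #{δ : Fin n → Fin k → Fin n | ∃ i j, SinkPair δ i j}) /
          Fintype.card (Fin n → Fin k → Fin n) := by
        gcongr
        exact_mod_cast hunion
    _ ≤ (n : ℝ) ^ ((1 : ℤ) - k) +
          ((k : ℝ) + 1) ^ (2 * k) / (2 * ((k - 1).factorial : ℝ)) * (n : ℝ) ^ ((1 : ℤ) - k) := by
        rw [add_div]
        exact add_le_add (card_filter_exists_sinkState_div_le (by omega))
          (card_filter_exists_sinkPair_div_le (by omega) hkn)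
    _ = _ := by ring

end ArxivAutomata
end
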